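/- arXiv:1512.06354 — 2 statements merged into one kernel-verified Lean document; each statement's English description precedes it below -/
import Mathlib

section
/- The norm on the Zorn vector-matrix octonion algebra is multiplicative: n(ab) = n(a)·n(b) for all octonions a, b. -/
open Matrix

/-- The Zorn vector-matrix algebra: elements `(α, u; v, β)` with `α β : F`, `u v : F³`. -/
def Zorn (F : Type*) : Type _ := F × F × (Fin 3 → F) × (Fin 3 → F)

namespace Zorn

variable {F : Type*} [Field F]

/-- Build a Zorn matrix from its four components. -/
def mk (a b : F) (u v : Fin 3 → F) : Zorn F := (a, b, u, v)

/-- The upper-left scalar entry `α`. -/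
def al (x : Zorn F) : F := x.1
/-- The lower-right scalar entry `β`. -/
def be (x : Zorn F) : F := x.2.1
/-- The upper-right vector entry `u`. -/
def up (x : Zorn F) : Fin 3 → F := x.2.2.1
/-- The lower-left vector entry `v`. -/
def lo (x : Zorn F) : Fin 3 → F := x.2.2.2

instance : AddCommGroup (Zorn F) :=
  inferInstanceAs (AddCommGroup (F × F × (Fin 3 → F) × (Fin 3 → F)))

instance : Module F (Zorn F) :=
  inferInstanceAs (Module F (F × F × (Fin 3 → F) × (Fin 3 → F)))

/-- Zorn vector-matrix multiplication. -/
instance : Mul (Zorn F) :=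
  ⟨fun x y => mk (x.al * y.al + x.up ⬝ᵥ y.lo)
      (x.be * y.be + x.lo ⬝ᵥ y.up)
      (x.al • y.up + y.be • x.up - crossProduct x.lo y.lo)
      (y.al • x.lo + x.be • y.lo + crossProduct x.up y.up)⟩

instance : One (Zorn F) := ⟨mk 1 1 0 0⟩

/-- The standard conjugation (involution) of the Zorn algebra. -/
def conj (x : Zorn F) : Zorn F := mk x.be x.al (-x.up) (-x.lo)

/-- The trace `t(a) = α + β` (the scalar such that `a + conj a = t a • 1`). -/
def t (x : Zorn F) : F := x.al + x.be

/-- The norm `n(a) = αβ - u·v` (the scalar such that `a * conj a = n a • 1`). -/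
def n (x : Zorn F) : F := x.al * x.be - x.up ⬝ᵥ x.lo

/-- The idempotent `e₁`. -/
def e₁ : Zorn F := mk 1 0 0 0
/-- The idempotent `e₂`. -/
def e₂ : Zorn F := mk 0 1 0 0
/-- The basis element `u_i`. -/
def U (i : Fin 3) : Zorn F := mk 0 0 (Pi.single i 1) 0
/-- The basis element `v_i`. -/
def V (i : Fin 3) : Zorn F := mk 0 0 0 (Pi.single i 1)

/-- An (algebra) automorphism of the Zorn algebra: a bijective `F`-linear,
multiplicative, unital self-map. -/
def IsAut (g : Zorn F → Zorn F) : Prop :=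
  Function.Bijective g ∧ (∀ x y : Zorn F, g (x + y) = g x + g y) ∧
    (∀ (c : F) (x : Zorn F), g (c • x) = c • g x) ∧
    (∀ x y : Zorn F, g (x * y) = g x * g y) ∧ g 1 = 1

end Zorn

/-!
Expand `n(ab)` bilinearly. The triple products `u · (u × u')` etc. vanish, and the one remaining
product of cross products is rewritten by the Binet–Cauchy identity
`(v × v') · (u × u') = (v · u)(v' · u') - (v · u')(v' · u)`, after which both sides agree as
polynomials in the scalars and the dot products.
-/

theorem dotProduct_zorn_up_lo {R : Type*} [CommRing R] (α β α' β' : R) (u v u' v' : Fin 3 → R) :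
    (α • u' + β' • u - v ⨯₃ v') ⬝ᵥ (α' • v + β • v' + u ⨯₃ u') =
      α * α' * (u' ⬝ᵥ v) + α * β * (u' ⬝ᵥ v') + α' * β' * (u ⬝ᵥ v) + β * β' * (u ⬝ᵥ v') -
        v ⨯₃ v' ⬝ᵥ u ⨯₃ u' := by
  have hv : v ⨯₃ v' ⬝ᵥ v = 0 := by rw [dotProduct_comm, dot_self_cross]
  have hv' : v ⨯₃ v' ⬝ᵥ v' = 0 := by rw [dotProduct_comm, dot_cross_self]
  simp only [sub_dotProduct, add_dotProduct, dotProduct_add, smul_dotProduct, dotProduct_smul,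
    smul_eq_mul, dot_self_cross, dot_cross_self, hv, hv']
  ring

namespace Zorn

variable {F : Type*} [Field F]

theorem al_mul (x y : Zorn F) : (x * y).al = x.al * y.al + x.up ⬝ᵥ y.lo := rfl

theorem be_mul (x y : Zorn F) : (x * y).be = x.be * y.be + x.lo ⬝ᵥ y.up := rfl

theorem up_mul (x y : Zorn F) : (x * y).up = x.al • y.up + y.be • x.up - x.lo ⨯₃ y.lo := rfl

theorem lo_mul (x y : Zorn F) : (x * y).lo = y.al • x.lo + x.be • y.lo + x.up ⨯₃ y.up := rfl

end Zorn

open Zorn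

/-- The norm of the Zorn octonion algebra is multiplicative. -/
theorem zorn_norm_mul {F : Type*} [Field F] (a b : Zorn F) :
    Zorn.n (a * b) = Zorn.n a * Zorn.n b := by
  rw [n, n, n, al_mul, be_mul, up_mul, lo_mul, dotProduct_zorn_up_lo, cross_dot_cross]
  simp only [dotProduct_comm a.lo, dotProduct_comm b.lo]
  ring
end

section
/- Let char F ≠ 2. For indices i ≠ j in {1,2,3} and k the remaining index, the evaluation Q(u₁, u₂, v_i, v_j) equals (1/6)(2(−1)^{ε_{ji}}δ_{k3} + δ_{i2}δ_{j1} − δ_{i1}δ_{j2}); in particular Q(u₁, u₂, v₁, v₂) = ±1/2 and Q(u₁, u₂, v_i, v_j) = 0 if {i,j} ≠ {1,2}. -/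
open Matrix

open Zorn

/-- `M(z₁,z₂) = ½(z₁z₂ − z₂z₁) + t(z₁)z₂ − t(z₂)z₁`. -/
def M {F : Type*} [Field F] (z₁ z₂ : Zorn F) : Zorn F :=
  (2 : F)⁻¹ • (z₁ * z₂ - z₂ * z₁) + Zorn.t z₁ • z₂ - Zorn.t z₂ • z₁

/-- `F(z₁,z₂,z₃,z₄) = t(M(z₁,z₂)·M(z₃,z₄))`. -/
def Fq {F : Type*} [Field F] (z₁ z₂ z₃ z₄ : Zorn F) : F :=
  Zorn.t (M z₁ z₂ * M z₃ z₄)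

/-- `Q`, the complete skew symmetrization of `F(z₁,z₂,z₃,z₄)`. -/
def Q {F : Type*} [Field F] (z₁ z₂ z₃ z₄ : Zorn F) : F :=
  (6 : F)⁻¹ * (Fq z₁ z₂ z₃ z₄ - Fq z₃ z₂ z₁ z₄ - Fq z₄ z₂ z₃ z₁ - Fq z₁ z₄ z₃ z₂
    - Fq z₁ z₃ z₂ z₄ - Fq z₃ z₄ z₂ z₁)

/-!
The elements `(0, u; 0, 0)` and `(0, 0; v, 0)` have trace zero, so on them `M` is half the
commutator: `M(u, u') = (0, 0; u × u', 0)`, `M(v, v') = (0, -(v × v'); 0, 0)` and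
`M(u, v) = ½ (u ⬝ v)(e₁ - e₂)`. Pairing these with the trace form `t(xy)` and using the quadruple
product identity `(a × b) ⬝ (c × d) = (a ⬝ c)(b ⬝ d) - (a ⬝ d)(b ⬝ c)`, the six terms of `Q` add up
to `½ ((a ⬝ d)(b ⬝ c) - (a ⬝ c)(b ⬝ d))` on `a, b` upper and `c, d` lower vectors. For basis
vectors this is `½ sgn σ · δ_{k3}`, a finite check over `S₃`.
-/

namespace Zorn

variable {F : Type*} [Field F]

theorem mk_mul_mk (a b a' b' : F) (u v u' v' : Fin 3 → F) :
    mk a b u v * mk a' b' u' v' =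
      mk (a * a' + u ⬝ᵥ v') (b * b' + v ⬝ᵥ u')
        (a • u' + b' • u - v ⨯₃ v') (a' • v + b • v' + u ⨯₃ u') := rfl

theorem mk_sub_mk (a b a' b' : F) (u v u' v' : Fin 3 → F) :
    mk a b u v - mk a' b' u' v' = mk (a - a') (b - b') (u - u') (v - v') := rfl

theorem smul_mk (c a b : F) (u v : Fin 3 → F) :
    c • mk a b u v = mk (c * a) (c * b) (c • u) (c • v) := rfl

theorem neg_mk (a b : F) (u v : Fin 3 → F) : -mk a b u v = mk (-a) (-b) (-u) (-v) := rfl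

theorem t_mk (a b : F) (u v : Fin 3 → F) : t (mk a b u v) = a + b := rfl

theorem t_mk_mul_mk (a b a' b' : F) (u v u' v' : Fin 3 → F) :
    t (mk a b u v * mk a' b' u' v') = a * a' + b * b' + u ⬝ᵥ v' + v ⬝ᵥ u' := by
  rw [mk_mul_mk, t_mk]; ring

theorem M_anticomm (x y : Zorn F) : M y x = -M x y := by
  simp only [M, neg_sub, smul_sub]
  abel

theorem M_of_t_eq_zero {x y : Zorn F} (hx : t x = 0) (hy : t y = 0) :
    M x y = (2 : F)⁻¹ • (x * y - y * x) := by
  rw [M, hx, hy, zero_smul, zero_smul, add_zero, sub_zero]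

section

variable (h2 : (2 : F) ≠ 0)
include h2

theorem M_up_up (u u' : Fin 3 → F) : M (mk 0 0 u 0) (mk 0 0 u' 0) = mk 0 0 0 (u ⨯₃ u') := by
  rw [M_of_t_eq_zero (by simp [t_mk]) (by simp [t_mk]), mk_mul_mk, mk_mul_mk, mk_sub_mk, smul_mk]
  congr 1 <;> simp only [mul_zero, dotProduct_zero, zero_dotProduct, add_zero, zero_add, sub_self,
    zero_smul, smul_zero, map_zero]
  rw [← cross_anticomm u u', sub_neg_eq_add, ← two_smul F, inv_smul_smul₀ h2]

theorem M_lo_lo (v v' : Fin 3 → F) : M (mk 0 0 0 v) (mk 0 0 0 v') = mk 0 0 (-(v ⨯₃ v')) 0 := by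
  rw [M_of_t_eq_zero (by simp [t_mk]) (by simp [t_mk]), mk_mul_mk, mk_mul_mk, mk_sub_mk, smul_mk]
  congr 1 <;> simp only [mul_zero, dotProduct_zero, zero_dotProduct, add_zero, sub_self, zero_sub,
    zero_smul, smul_zero, map_zero, cross_anticomm]
  rw [← cross_anticomm v' v, sub_neg_eq_add, ← two_smul F, inv_smul_smul₀ h2]

end

theorem M_up_lo (u v : Fin 3 → F) :
    M (mk 0 0 u 0) (mk 0 0 0 v) = mk (2⁻¹ * (u ⬝ᵥ v)) (-(2⁻¹ * (u ⬝ᵥ v))) 0 0 := by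
  rw [M_of_t_eq_zero (by simp [t_mk]) (by simp [t_mk]), mk_mul_mk, mk_mul_mk, mk_sub_mk, smul_mk]
  congr 1 <;> simp [dotProduct_comm v u]

theorem M_lo_up (u v : Fin 3 → F) :
    M (mk 0 0 0 v) (mk 0 0 u 0) = mk (-(2⁻¹ * (u ⬝ᵥ v))) (2⁻¹ * (u ⬝ᵥ v)) 0 0 := by
  rw [M_anticomm, M_up_lo, neg_mk, neg_neg, neg_zero]

theorem Q_up_up_lo_lo (h2 : (2 : F) ≠ 0) (a b c d : Fin 3 → F) :
    Q (mk 0 0 a 0) (mk 0 0 b 0) (mk 0 0 0 c) (mk 0 0 0 d) =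
      6⁻¹ * (3 * (a ⬝ᵥ d * b ⬝ᵥ c - a ⬝ᵥ c * b ⬝ᵥ d)) := by
  simp only [Q, Fq, M_up_up h2, M_lo_lo h2, M_up_lo, M_lo_up, t_mk_mul_mk,
    neg_dotProduct, dotProduct_neg, dotProduct_zero, cross_dot_cross,
    dotProduct_comm c, dotProduct_comm d]
  field_simp
  ring

theorem Q_U_U_V_V (h2 : (2 : F) ≠ 0) (a b i j : Fin 3) :
    Q (U a : Zorn F) (U b) (V i) (V j) =
      6⁻¹ * (3 * ((if i = b then 1 else 0) * (if j = a then 1 else 0)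
        - (if i = a then 1 else 0) * (if j = b then 1 else 0))) := by
  rw [U, U, V, V, Q_up_up_lo_lo h2]
  simp only [single_one_dotProduct, Pi.single_apply, eq_comm (a := a), eq_comm (a := b)]
  ring

end Zorn

theorem Equiv.Perm.sign_fin_three_mul_ite {R : Type*} [Ring R] (σ : Equiv.Perm (Fin 3)) :
    ((sign σ : ℤ) : R) * (if σ 0 = 2 then 1 else 0) =
      (if σ 2 = 1 then 1 else 0) * (if σ 1 = 0 then 1 else 0)
        - (if σ 2 = 0 then 1 else 0) * (if σ 1 = 1 then 1 else 0) := by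
  have key : ∀ τ : Equiv.Perm (Fin 3), (sign τ : ℤ) * (if τ 0 = 2 then 1 else 0) =
      (if τ 2 = 1 then 1 else 0) * (if τ 1 = 0 then 1 else 0)
        - (if τ 2 = 0 then 1 else 0) * (if τ 1 = 1 then 1 else 0) := by decide
  exact_mod_cast congrArg (Int.cast : ℤ → R) (key σ)

/-- Indices are 0-based: `U 0` is `u₁` etc., and `ε_{ji}` is realized by a permutation `σ` sending
`(0,1,2)` to `(k,j,i)`. -/
theorem zorn_Q_uuvv_general {F : Type*} [Field F] (h2 : (2 : F) ≠ 0) (h3 : (3 : F) ≠ 0)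
    (i j k : Fin 3)
    (σ : Equiv.Perm (Fin 3)) (hσ0 : σ 0 = k) (hσ1 : σ 1 = j) (hσ2 : σ 2 = i) :
    Q (U 0 : Zorn F) (U 1) (V i) (V j) =
      (1 / 6 : F) * (2 * ((Equiv.Perm.sign σ : ℤ) : F) * (if k = 2 then 1 else 0)
        + (if i = 1 then 1 else 0) * (if j = 0 then 1 else 0)
        - (if i = 0 then 1 else 0) * (if j = 1 then 1 else 0)) ∧
    (Q (U 0 : Zorn F) (U 1) (V 0) (V 1) = (1 / 2 : F) ∨
      Q (U 0 : Zorn F) (U 1) (V 0) (V 1) = -(1 / 2 : F)) ∧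
    (({i, j} : Finset (Fin 3)) ≠ {0, 1} → Q (U 0 : Zorn F) (U 1) (V i) (V j) = 0) := by
  simp only [Zorn.Q_U_U_V_V h2]
  refine ⟨?_, Or.inr ?_, fun hne => ?_⟩
  · subst hσ0 hσ1 hσ2
    linear_combination -(2 / 6 : F) * Equiv.Perm.sign_fin_three_mul_ite (R := F) σ
  · rw [show (6 : F) = 2 * 3 by norm_num, mul_inv, mul_assoc, inv_mul_cancel_left₀ h3]
    norm_num
  · fin_cases i <;> fin_cases j <;>
      first | exact absurd rfl hne | exact absurd (Finset.pair_comm _ _) hne | simp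

/-- The values `Q(u₁, u₂, v_i, v_j)` for `i ≠ j`. (Indices are 0-based: `U 0`
is `u₁` etc., and `ε_{ji}` is realized by a permutation `σ` sending `(0,1,2)` to
`(k,j,i)`.) -/
theorem zorn_Q_uuvv {F : Type*} [Field F] (h2 : (2 : F) ≠ 0) (h3 : (3 : F) ≠ 0)
    (i j k : Fin 3) (hij : i ≠ j) (hki : k ≠ i) (hkj : k ≠ j)
    (σ : Equiv.Perm (Fin 3)) (hσ0 : σ 0 = k) (hσ1 : σ 1 = j) (hσ2 : σ 2 = i) :
    Q (U 0 : Zorn F) (U 1) (V i) (V j) =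
      (1 / 6 : F) * (2 * ((Equiv.Perm.sign σ : ℤ) : F) * (if k = 2 then 1 else 0)
        + (if i = 1 then 1 else 0) * (if j = 0 then 1 else 0)
        - (if i = 0 then 1 else 0) * (if j = 1 then 1 else 0)) ∧
    (Q (U 0 : Zorn F) (U 1) (V 0) (V 1) = (1 / 2 : F) ∨
      Q (U 0 : Zorn F) (U 1) (V 0) (V 1) = -(1 / 2 : F)) ∧
    (({i, j} : Finset (Fin 3)) ≠ {0, 1} → Q (U 0 : Zorn F) (U 1) (V i) (V j) = 0) :=
  zorn_Q_uuvv_general h2 h3 i j k σ hσ0 hσ1 hσ2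
end
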